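/- The characteristic function F_{FAF,C} of a fuzzy argumentation framework restricted to a fuzzy subset C is monotone with respect to fuzzy set inclusion: if S₁ ⊆ S₂ ⊆ A then F_{FAF,C}(S₁) ⊆ F_{FAF,C}(S₂). -/

import Mathlib

open scoped Classical

noncomputable section

structure FAF (Args : Type) where
  arg : Args → ℝ
  atk : Args → Args → ℝ
  arg_mem : ∀ x, arg x ∈ Set.Icc (0:ℝ) 1
  atk_mem : ∀ x y, atk x y ∈ Set.Icc (0:ℝ) 1

namespace FAF

variable {Args : Type}

/-- fuzzy set inclusion: pointwise ≤ of membership degrees -/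
def incl (S T : Args → ℝ) : Prop := ∀ x, S x ≤ T x

/-- fuzzy set intersection: pointwise min -/
def inter (S T : Args → ℝ) : Args → ℝ := fun x => min (S x) (T x)

/-- an attack by an argument of degree `a`, along an attack of degree `ρ`, on an
argument of degree `b` is tolerable iff `min a ρ + b ≤ 1` (Gödel t-norm). -/
def Tolerable (a ρ b : ℝ) : Prop := min a ρ + b ≤ 1

/-- the result of weakening degree `b` by an attacker of degree `a` along `ρ`:
`b' = min (1 - min a ρ) b`. -/
def weaken (a ρ b : ℝ) : ℝ := min (1 - min a ρ) b

/-- `S` weakening defends the fuzzy argument `(x, c)` in `F`: for every `(B, 𝒜 B)` there is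
some `(A, S A)` weakening `(B, 𝒜 B)` to `(B, b')` such that `(B, b')` tolerably attacks `(x, c)`. -/
def Defends (F : FAF Args) (S : Args → ℝ) (x : Args) (c : ℝ) : Prop :=
  ∀ B : Args, ∃ A : Args,
    Tolerable (weaken (S A) (F.atk A B) (F.arg B)) (F.atk B x) c

/-- a fuzzy set is conflict-free iff all attacks between its elements are tolerable. -/
def ConflictFree (F : FAF Args) (E : Args → ℝ) : Prop :=
  ∀ A B : Args, Tolerable (E A) (F.atk A B) (E B)

/-- `E` is an admissible set in `C`: `E ⊆ C`, `E` conflict-free, and `E` weakening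
defends each of its elements. -/
def AdmissibleIn (F : FAF Args) (C E : Args → ℝ) : Prop :=
  (∀ x, 0 ≤ E x) ∧ incl E C ∧ F.ConflictFree E ∧ ∀ x, F.Defends E x (E x)

/-- the characteristic function of `F` in `C`: `S ↦ { (A,a) ∈ C ∣ S weakening defends (A,a) }`. -/
def charFun (F : FAF Args) (C S : Args → ℝ) : Args → ℝ :=
  fun x => sSup {c : ℝ | 0 ≤ c ∧ c ≤ C x ∧ F.Defends S x c}

/-- `E` is a complete extension in `C`: admissible in `C` and contains every fuzzy
argument of `C` that it weakening defends. -/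
def CompleteIn (F : FAF Args) (C E : Args → ℝ) : Prop :=
  F.AdmissibleIn C E ∧ ∀ x c, 0 ≤ c → c ≤ C x → F.Defends E x c → c ≤ E x

/-- `E` is a preferred extension in `C`: maximal (w.r.t. fuzzy set inclusion)
admissible set in `C`. -/
def PreferredIn (F : FAF Args) (C E : Args → ℝ) : Prop :=
  F.AdmissibleIn C E ∧ ∀ E', F.AdmissibleIn C E' → incl E E' → incl E' E

/-- `G` is the grounded extension of `F` in `C`: the least fixed point of the
characteristic function `F_{FAF,C}` among fuzzy subsets of `C`. -/
def IsGroundedIn (F : FAF Args) (C G : Args → ℝ) : Prop :=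
  (∀ x, 0 ≤ G x ∧ G x ≤ C x) ∧ F.charFun C G = G ∧
    ∀ G', (∀ x, 0 ≤ G' x ∧ G' x ≤ C x) → F.charFun C G' = G' → incl G G'

/-- an attack edge exists when the attack degree is positive -/
def Edge (F : FAF Args) (A B : Args) : Prop := 0 < F.atk A B

/-- path-equivalence: `A = B`, or there are chains of attacks from `A` to `B` and from `B` to `A`. -/
def PE (F : FAF Args) (A B : Args) : Prop :=
  A = B ∨ (Relation.TransGen F.Edge A B ∧ Relation.TransGen F.Edge B A)

/-- the strongly connected component of `A0`, as a fuzzy set (nodes with their belief degrees). -/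
def scc (F : FAF Args) (A0 : Args) : Args → ℝ :=
  fun B => if F.PE A0 B then F.arg B else 0

/-- the limited part `L_FAF(S,E)` of the SCC of `A0`:
`x ↦ max over (B, E B) outside the SCC attacking x of min (E B) (ρ B x)` (0 if none). -/
def limited (F : FAF Args) (A0 : Args) (E : Args → ℝ) : Args → ℝ :=
  fun x => sSup {v : ℝ | ∃ B : Args, ¬ F.PE A0 B ∧ F.Edge B x ∧ v = min (E B) (F.atk B x)}

/-- the residual part `R_FAF(S,E)`: each `x` in the SCC of `A0` gets degree
`min (𝒜 x) (1 - L_FAF(S,E) x)`. -/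
def residual (F : FAF Args) (A0 : Args) (E : Args → ℝ) : Args → ℝ :=
  fun x => if F.PE A0 x then min (F.arg x) (1 - F.limited A0 E x) else 0

/-- `(x,a)` is defended w.r.t. `E` against outside attackers: every `(B, 𝒜 B)` outside the SCC
of `A0` that sufficiently attacks `(x,a)` is weakened by some `(Cc, E Cc)` so that its attack
on `(x,a)` becomes tolerable. -/
def DefendedAt (F : FAF Args) (A0 : Args) (E : Args → ℝ) (x : Args) (a : ℝ) : Prop :=
  ∀ B : Args, ¬ F.PE A0 B → ¬ Tolerable (F.arg B) (F.atk B x) a →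
    ∃ Cc : Args, Tolerable (weaken (E Cc) (F.atk Cc B) (F.arg B)) (F.atk B x) a

/-- the defended part `D_FAF(S,E)` as a fuzzy set: the largest degree `a` below the residual
degree such that `(x,a)` is defended by `E` against all sufficient attackers from outside. -/
def defendedPart (F : FAF Args) (A0 : Args) (E : Args → ℝ) : Args → ℝ :=
  fun x => sSup {a : ℝ | 0 ≤ a ∧ a ≤ F.residual A0 E x ∧ F.DefendedAt A0 E x a}

/-- restriction `FAF↓_T` of `F` to a fuzzy set `T`: arguments get degrees of `T`,
attacks are kept within the support of `T`. -/
def restrict (F : FAF Args) (T : Args → ℝ) : FAF Args where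
  arg := fun x => max 0 (min 1 (T x))
  atk := fun x y => if 0 < T x ∧ 0 < T y then F.atk x y else 0
  arg_mem := fun x => ⟨le_max_left 0 _, max_le zero_le_one (min_le_left 1 _)⟩
  atk_mem := fun x y => by
    split
    · exact F.atk_mem x y
    · exact ⟨le_rfl, zero_le_one⟩

/-- the SCC of `A0` attacks the (distinct) SCC of `B0`. -/
def sccAttacks (F : FAF Args) (A0 B0 : Args) : Prop :=
  ¬ F.PE A0 B0 ∧ ∃ x y : Args, F.PE A0 x ∧ F.PE B0 y ∧ F.Edge x y

theorem weaken_le_weaken_of_le {a a' : ℝ} (h : a ≤ a') (ρ b : ℝ) :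
    weaken a' ρ b ≤ weaken a ρ b :=
  min_le_min_right b (by linarith [min_le_min_right ρ h])

theorem Tolerable.of_le {a a' ρ b : ℝ} (h : a' ≤ a) (ht : Tolerable a ρ b) :
    Tolerable a' ρ b :=
  le_trans (by linarith [min_le_min_right ρ h]) ht

theorem Defends.mono (F : FAF Args) {S T : Args → ℝ} (hST : incl S T) {x : Args} {c : ℝ}
    (hS : F.Defends S x c) : F.Defends T x c := fun B =>
  let ⟨A, hA⟩ := hS B
  ⟨A, hA.of_le (weaken_le_weaken_of_le (hST A) _ _)⟩

end FAF

theorem Real.sSup_le_sSup_of_nonneg {s t : Set ℝ} (hst : s ⊆ t) (ht : BddAbove t)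
    (ht₀ : ∀ x ∈ t, 0 ≤ x) : sSup s ≤ sSup t := by
  rcases s.eq_empty_or_nonempty with rfl | hs
  · exact Real.sSup_empty.trans_le (Real.sSup_nonneg ht₀)
  · exact csSup_le_csSup ht hs hst

theorem charFun_monotone_general {Args : Type} (F : FAF Args) (C S₁ S₂ : Args → ℝ)
    (h12 : FAF.incl S₁ S₂) :
    FAF.incl (F.charFun C S₁) (F.charFun C S₂) := fun x =>
  Real.sSup_le_sSup_of_nonneg
    (fun _ ⟨hc₀, hcC, hdef⟩ => ⟨hc₀, hcC, hdef.mono F h12⟩)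
    ⟨C x, fun _ hc => hc.2.1⟩ (fun _ hc => hc.1)

theorem charFun_monotone {Args : Type} (F : FAF Args) (C S₁ S₂ : Args → ℝ)
    (hC : ∀ x, 0 ≤ C x ∧ C x ≤ F.arg x)
    (h12 : FAF.incl S₁ S₂) (h2A : FAF.incl S₂ F.arg) :
    FAF.incl (F.charFun C S₁) (F.charFun C S₂) :=
  charFun_monotone_general F C S₁ S₂ h12
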